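/- (Polynomial lemma on central sets) Let 0 < ε ≪ 1, let S be a central set of width w ≲ 1, and let P be a polynomial of degree at most D on ℝ. Then there exists a subset S' ⊂ S with |S'| ≳ |S| such that |P(x)| ≳ C_D ‖P‖_{L^∞([−w,w])} for all x ∈ S', where the constants depend only on D and ε. In particular, taking S = [−w,w], one has ‖P‖_{L^∞([−w,w])} ∼ w^{-1} ∫_{[−w,w]} |P(x)| dx. -/

import Mathlib

open MeasureTheory Set Metric
open scoped ENNReal NNReal

noncomputable section

/-- `E n` is Euclidean space `ℝ^n`. -/
abbrev E (n : ℕ) : Type := EuclideanSpace ℝ (Fin n)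

/-- The Lie bracket `[X,Y]` of two vector fields on `ℝ^n`. -/
def lieB {n : ℕ} (X Y : E n → E n) : E n → E n :=
  fun x => fderiv ℝ Y x (X x) - fderiv ℝ X x (Y x)

/-- The iterated Lie bracket `X_w` associated to a (nonempty) word `w`.
Words are represented as lists with the *last* letter at the head, so that
`X_{(w,j)} = [X_w, X_j]` corresponds to `XW X (j :: w) = [XW X w, X j]`. -/
def XW {n k : ℕ} (X : Fin k → E n → E n) : List (Fin k) → E n → E n
  | [] => fun _ => 0
  | [j] => X j
  | j :: w => lieB (XW X w) (X j)

/-- The degree of an `n`-tuple of words `I`: `degI I j` counts the total number of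
occurrences of the letter `j`. -/
def degI {n k : ℕ} (I : Fin n → List (Fin k)) (j : Fin k) : ℕ := ∑ i, (I i).count j

/-- `λ_I(x) = det (X_{w_1}(x), …, X_{w_n}(x))`. -/
def lam {n k : ℕ} (X : Fin k → E n → E n) (I : Fin n → List (Fin k)) (x : E n) : ℝ :=
  Matrix.det (Matrix.of fun i i' => XW X (I i) x i')

/-- `δ^β = ∏_j δ_j^{β_j}`. -/
def dpow {k : ℕ} (δ : Fin k → ℝ) (β : Fin k → ℕ) : ℝ := ∏ j, δ j ^ β j

/-- Membership in the finite collection `𝐈` of `n`-tuples of (nonempty) words whose degrees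
are bounded by `D` in each component. -/
def inIset {n k : ℕ} (D : ℝ) (I : Fin n → List (Fin k)) : Prop :=
  (∀ i, I i ≠ []) ∧ ∀ j, (degI I j : ℝ) ≤ D

/-- the total degree `d` of an `n`-tuple of words -/
def degTot {n k : ℕ} (I : Fin n → List (Fin k)) : ℝ := ∑ j, (degI I j : ℝ)

/-- `|Λ_δ(x)|`: the (sup-norm) size of the vector `(δ^{deg I} λ_I(x))_{I ∈ 𝐈}`,
where `𝐈` is the set of `n`-tuples of words of degree at most `D` in each letter. -/
def LamSup {n k : ℕ} (X : Fin k → E n → E n) (D : ℝ) (δ : Fin k → ℝ) (x : E n) : ℝ :=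
  sSup {r | ∃ I : Fin n → List (Fin k), inIset D I ∧ r = dpow δ (degI I) * |lam X I x|}

/-- The Newton polytope `P` of the vector fields `X_1,…,X_k`: the closed convex hull of
`{b : b ≥ deg I for some I with λ_I(0) ≠ 0}`. -/
def newtonP (n k : ℕ) (X : Fin k → E n → E n) : Set (Fin k → ℝ) :=
  closure (convexHull ℝ {b : Fin k → ℝ | ∃ I : Fin n → List (Fin k),
    (∀ i, I i ≠ []) ∧ lam X I 0 ≠ 0 ∧ ∀ j, (degI I j : ℝ) ≤ b j})

/-- `b(p)_i = p_i⁻¹ / (∑_j p_j⁻¹ − 1)`. -/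
def bOf {k : ℕ} (p : Fin k → ℝ≥0∞) : Fin k → ℝ :=
  fun i => ((p i)⁻¹).toReal / ((∑ j, ((p j)⁻¹).toReal) - 1)

/-- `φ j` is the flow of the vector field `X j`: `φ j t x = e^{tX_j}(x)`. -/
def IsFlowOf {n k : ℕ} (X : Fin k → E n → E n) (φ : Fin k → ℝ → E n → E n) : Prop :=
  (∀ j x, φ j 0 x = x) ∧ ∀ j x t, HasDerivAt (fun s => φ j s x) (X j (φ j t x)) t

/-- The multi-parameter Carnot–Carathéodory ball `B(x; δ_1,…,δ_k)`: the closure of the set of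
points reachable from `x` by flowing along the vector fields `δ_{j_i} X_{j_i}` for total time
at most 1. -/
def ccBall {n k : ℕ} (φ : Fin k → ℝ → E n → E n) (δ : Fin k → ℝ) (x : E n) : Set (E n) :=
  closure {y | ∃ L : List (Fin k × ℝ), (L.map fun q => |q.2|).sum ≤ 1 ∧
    y = L.foldl (fun z q => φ q.1 (q.2 * δ q.1) z) x}

/-- The restricted ball `B_𝐣(x;δ)` for a sequence `𝐣 ∈ {1,…,k}^n`. -/
def ccBallJ {n k : ℕ} (φ : Fin k → ℝ → E n → E n) (δ : Fin k → ℝ) (js : Fin n → Fin k)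
    (x : E n) : Set (E n) :=
  closure {y | ∃ t : Fin n → ℝ, (∀ i, |t i| ≤ 1) ∧
    y = (List.finRange n).foldl (fun z i => φ (js i) (t i * δ (js i)) z) x}

/-- A central set of width `w` (with centrality constant `A`): a subset of `[-w,w]` of positive
measure meeting every interval `I` in measure `≤ A (|I|/w)^ε |S|`. -/
def IsCentral (ε A w : ℝ) (S : Set ℝ) : Prop :=
  S ⊆ Set.Icc (-w) w ∧ MeasurableSet S ∧ 0 < volume S ∧
  ∀ a b : ℝ, a ≤ b →
    (volume (Set.Icc a b ∩ S)).toReal ≤ A * ((b - a) / w) ^ ε * (volume S).toReal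

/-- The sup norm `‖P‖_{L^∞([-w,w])}` of a one-variable polynomial. -/
def polySup (P : Polynomial ℝ) (w : ℝ) : ℝ :=
  sSup ((fun y => |P.eval y|) '' Set.Icc (-w) w)

/- Let `M = ‖P‖_{L^∞([-w,w])}`. If the sublevel set `{|P| ≤ c M}` contained `D + 1` points of
`[-w,w]` that are `σ w` apart, Lagrange interpolation at these nodes would give
`M ≤ (D + 1) (2/σ)^D c M`, which fails for small `c` unless `M = 0`. A greedy argument therefore
covers the sublevel set by `D` intervals of length `σ w`, and centrality bounds its intersection
with `S` by `D A σ^ε |S| ≤ |S| / 2`. Since `[-w,w]` is itself central (for `ε ≤ 1`), `|P| ≳ M`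
on half of `[-w,w]`, which gives `w⁻¹ ∫ |P| ≳ M`; the bound `w⁻¹ ∫ |P| ≤ 2 M` is trivial. -/

theorem exists_separated_or_subset_iUnion_Icc {K : Set ℝ} (hK : IsClosed K) (hbdd : BddBelow K)
    (s : ℝ) (m : ℕ) :
    (∃ x : Fin (m + 1) → ℝ, (∀ i, x i ∈ K) ∧ ∀ i j, i < j → x i + s ≤ x j) ∨
      ∃ g : Fin m → ℝ, K ⊆ ⋃ i, Icc (g i) (g i + s) := by
  induction m generalizing K with
  | zero =>
    rcases K.eq_empty_or_nonempty with rfl | ⟨y, hy⟩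
    · exact Or.inr ⟨Fin.elim0, empty_subset _⟩
    · exact Or.inl ⟨fun _ => y, fun _ => hy, fun i j hij => by omega⟩
  | succ m ih =>
    rcases K.eq_empty_or_nonempty with rfl | hne
    · exact Or.inr ⟨fun _ => 0, empty_subset _⟩
    have hinf : sInf K ∈ K := hK.csInf_mem hne hbdd
    rcases ih (hK.inter isClosed_Ici) (hbdd.mono inter_subset_left) with ⟨x, hxK, hx⟩ | ⟨g, hg⟩
    · refine Or.inl ⟨Fin.cons (sInf K) x, Fin.cases hinf fun i => (hxK i).1, ?_⟩
      intro i j hij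
      obtain ⟨j, rfl⟩ := Fin.exists_succ_eq.mpr (Fin.pos_iff_ne_zero.mp (i.zero_le.trans_lt hij))
      cases i using Fin.cases with
      | zero => simpa using (hxK j).2
      | succ i => simpa using hx i j (Fin.succ_lt_succ_iff.mp hij)
    · refine Or.inr ⟨Fin.cons (sInf K) g, fun y hy => ?_⟩
      rcases le_or_gt y (sInf K + s) with hys | hys
      · exact mem_iUnion.mpr ⟨0, by simpa using ⟨csInf_le hbdd hy, hys⟩⟩
      · obtain ⟨i, hi⟩ := mem_iUnion.mp (hg ⟨hy, hys.le⟩)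
        exact mem_iUnion.mpr ⟨i.succ, by simpa using hi⟩

section Lagrange

open Polynomial Finset

variable {ι : Type*} [DecidableEq ι] {s : Finset ι} {v : ι → ℝ} {y δ R : ℝ}

theorem abs_eval_basis_le (hδ : 0 < δ) {i : ι} (hsep : ∀ j ∈ s, j ≠ i → δ ≤ |v i - v j|)
    (hy : ∀ j ∈ s, |y - v j| ≤ R) :
    |(Lagrange.basis s v i).eval y| ≤ (R / δ) ^ #(s.erase i) := by
  rw [Lagrange.basis, eval_prod, abs_prod, ← prod_const]
  refine prod_le_prod (fun _ _ => abs_nonneg _) fun j hj => ?_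
  obtain ⟨hji, hjs⟩ := mem_erase.mp hj
  have hyj := hy j hjs
  have habs : |(Lagrange.basisDivisor (v i) (v j)).eval y| = |y - v j| / |v i - v j| := by
    simp [Lagrange.basisDivisor, abs_mul, abs_inv, div_eq_inv_mul]
  rw [habs]
  exact div_le_div₀ ((abs_nonneg _).trans hyj) hyj hδ (hsep j hjs hji)

theorem abs_eval_le_of_separated {P : ℝ[X]} {t : ℝ} (hδ : 0 < δ)
    (hsep : ∀ i ∈ s, ∀ j ∈ s, i ≠ j → δ ≤ |v i - v j|) (hy : ∀ j ∈ s, |y - v j| ≤ R)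
    (hdeg : P.degree < #s) (hP : ∀ i ∈ s, |P.eval (v i)| ≤ t) :
    |P.eval y| ≤ #s * (R / δ) ^ (#s - 1) * t := by
  have hinj : Set.InjOn v s := fun i hi j hj hij => by
    by_contra hne
    have := hsep i hi j hj hne
    rw [hij, sub_self, abs_zero] at this
    exact hδ.not_ge this
  have hbasis : ∀ i ∈ s, |(Lagrange.basis s v i).eval y| ≤ (R / δ) ^ (#s - 1) := fun i hi => by
    rw [← card_erase_of_mem hi]
    exact abs_eval_basis_le hδ (fun j hj hji => hsep i hi j hj hji.symm) hy
  calc |P.eval y| = |∑ i ∈ s, P.eval (v i) * (Lagrange.basis s v i).eval y| := by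
        conv_lhs => rw [Lagrange.eq_interpolate hinj hdeg]
        simp [Lagrange.interpolate_apply, eval_finsetSum]
    _ ≤ ∑ i ∈ s, t * (R / δ) ^ (#s - 1) := by
        refine (abs_sum_le_sum_abs _ _).trans (sum_le_sum fun i hi => ?_)
        rw [abs_mul]
        exact mul_le_mul (hP i hi) (hbasis i hi) (abs_nonneg _) ((abs_nonneg _).trans (hP i hi))
    _ = #s * (R / δ) ^ (#s - 1) * t := by rw [sum_const, nsmul_eq_mul]; ring

end Lagrange

section PolySup

variable (P : Polynomial ℝ) {w : ℝ}

theorem le_polySup {y : ℝ} (hy : y ∈ Icc (-w) w) : |P.eval y| ≤ polySup P w :=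
  le_csSup (isCompact_Icc.image (continuous_abs.comp P.continuous)).bddAbove ⟨y, hy, rfl⟩

theorem polySup_nonneg (hw : 0 ≤ w) : 0 ≤ polySup P w :=
  (abs_nonneg _).trans (le_polySup P ⟨neg_nonpos.2 hw, hw⟩)

theorem polySup_le {b : ℝ} (hw : 0 ≤ w) (h : ∀ y ∈ Icc (-w) w, |P.eval y| ≤ b) :
    polySup P w ≤ b :=
  csSup_le ((nonempty_Icc.2 (by linarith)).image _) (by rintro r ⟨y, hy, rfl⟩; exact h y hy)

theorem polySup_le_of_separated {D : ℕ} (hP : P.natDegree ≤ D) {δ t : ℝ} (hw : 0 ≤ w)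
    (hδ : 0 < δ) (x : Fin (D + 1) → ℝ) (hx : ∀ i, x i ∈ Icc (-w) w)
    (hsep : ∀ i j, i < j → x i + δ ≤ x j) (ht : ∀ i, |P.eval (x i)| ≤ t) :
    polySup P w ≤ (D + 1) * (2 * w / δ) ^ D * t := by
  have hgap : ∀ i ∈ Finset.univ, ∀ j ∈ Finset.univ, i ≠ j → δ ≤ |x i - x j| := by
    intro i _ j _ hij
    rcases hij.lt_or_gt with h | h
    · rw [abs_sub_comm, abs_of_nonneg (by linarith [hsep i j h])]; linarith [hsep i j h]
    · rw [abs_of_nonneg (by linarith [hsep j i h])]; linarith [hsep j i h]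
  have hdeg : P.degree < (Finset.univ : Finset (Fin (D + 1))).card := by
    rw [Finset.card_univ, Fintype.card_fin]
    exact P.degree_le_natDegree.trans_lt (by exact_mod_cast Nat.lt_succ_of_le hP)
  refine polySup_le P hw fun y hy => ?_
  have hdist : ∀ j ∈ Finset.univ, |y - x j| ≤ 2 * w := fun j _ => by
    rw [abs_le]; constructor <;> linarith [hx j |>.1, hx j |>.2, hy.1, hy.2]
  simpa using abs_eval_le_of_separated hδ hgap hdist hdeg fun i _ => ht i

end PolySup

namespace IsCentral

variable {ε A w : ℝ} {S : Set ℝ}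

theorem volume_ne_top (hS : IsCentral ε A w S) : volume S ≠ ⊤ :=
  ne_top_of_le_ne_top (by simp) (measure_mono hS.1)

theorem mono {A' : ℝ} (hS : IsCentral ε A w S) (hw : 0 ≤ w) (hA : A ≤ A') :
    IsCentral ε A' w S := by
  refine ⟨hS.1, hS.2.1, hS.2.2.1, fun a b hab => (hS.2.2.2 a b hab).trans ?_⟩
  have : 0 ≤ ((b - a) / w) ^ ε := Real.rpow_nonneg (div_nonneg (by linarith) hw) ε
  gcongr

theorem volume_inter_iUnion_Icc_le (hS : IsCentral ε A w S) {m : ℕ} (g : Fin m → ℝ) {ℓ : ℝ}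
    (hℓ : 0 ≤ ℓ) :
    (volume (S ∩ ⋃ i, Icc (g i) (g i + ℓ))).toReal ≤ m * (A * (ℓ / w) ^ ε) * (volume S).toReal :=
  calc volume.real (S ∩ ⋃ i, Icc (g i) (g i + ℓ))
      = volume.real (⋃ i, Icc (g i) (g i + ℓ) ∩ S) := by rw [inter_comm, iUnion_inter]
    _ ≤ ∑ i, volume.real (Icc (g i) (g i + ℓ) ∩ S) := measureReal_iUnion_fintype_le _
    _ ≤ ∑ _i : Fin m, A * (ℓ / w) ^ ε * volume.real S := by
        refine Finset.sum_le_sum fun i _ => ?_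
        have h := hS.2.2.2 (g i) (g i + ℓ) (by linarith)
        rwa [add_sub_cancel_left] at h
    _ = m * (A * (ℓ / w) ^ ε) * volume.real S := by simp [mul_assoc]

end IsCentral

theorem isCentral_Icc {ε w : ℝ} (hε : 0 < ε) (hε1 : ε ≤ 1) (hw : 0 < w) :
    IsCentral ε 1 w (Icc (-w) w) := by
  refine ⟨subset_rfl, measurableSet_Icc, by simp [hw], fun a b hab => ?_⟩
  change volume.real _ ≤ _ * volume.real _
  rw [Real.volume_real_Icc_of_le (by linarith), one_mul]
  have hI : volume.real (Icc a b ∩ Icc (-w) w) ≤ volume.real (Icc a b) :=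
    measureReal_mono inter_subset_left measure_Icc_lt_top.ne
  have hW : volume.real (Icc a b ∩ Icc (-w) w) ≤ volume.real (Icc (-w) w) :=
    measureReal_mono inter_subset_right measure_Icc_lt_top.ne
  rw [Real.volume_real_Icc_of_le hab] at hI
  rw [Real.volume_real_Icc_of_le (by linarith)] at hW
  rcases le_or_gt (b - a) w with h | h
  · have hr0 : 0 ≤ (b - a) / w := div_nonneg (by linarith) hw.le
    have hr : (b - a) / w ≤ ((b - a) / w) ^ ε :=
      Real.self_le_rpow_of_le_one hr0 ((div_le_one hw).2 h) hε1
    calc _ ≤ b - a := hI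
      _ = (b - a) / w * w := by field_simp
      _ ≤ ((b - a) / w) ^ ε * (w - -w) := by nlinarith [mul_le_mul_of_nonneg_right hr hw.le]
  · have : 1 ≤ ((b - a) / w) ^ ε := Real.one_le_rpow ((le_div_iff₀ hw).2 (by linarith)) hε.le
    nlinarith

theorem IsCentral.exists_subset_abs_eval_ge {ε A w : ℝ} {S : Set ℝ} (hS : IsCentral ε A w S)
    (hw : 0 < w) {D : ℕ} {σ : ℝ} (hσ : 0 < σ) (hσA : D * (A * σ ^ ε) ≤ 1 / 2)
    {P : Polynomial ℝ} (hP : P.natDegree ≤ D) :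
    ∃ S' ⊆ S, MeasurableSet S' ∧ 1 / 2 * (volume S).toReal ≤ (volume S').toReal ∧
      ∀ x ∈ S', (2 * (D + 1) * (2 / σ) ^ D)⁻¹ * polySup P w ≤ |P.eval x| := by
  set c := (2 * (D + 1) * (2 / σ) ^ D)⁻¹ * polySup P w
  have hM := polySup_nonneg P hw.le
  rcases hM.eq_or_lt with hM0 | hMpos
  · exact ⟨S, subset_rfl, hS.2.1, by linarith [ENNReal.toReal_nonneg (a := volume S)],
      fun x _ => by simp [c, ← hM0]⟩
  set K := Icc (-w) w ∩ {x | |P.eval x| ≤ c}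
  have hK : IsClosed K := isClosed_Icc.inter (isClosed_le (by fun_prop) continuous_const)
  obtain ⟨g, hg⟩ : ∃ g : Fin D → ℝ, K ⊆ ⋃ i, Icc (g i) (g i + σ * w) := by
    refine (exists_separated_or_subset_iUnion_Icc hK (bddBelow_Icc.mono inter_subset_left)
      (σ * w) D).resolve_left ?_
    rintro ⟨x, hxK, hx⟩
    have hle := polySup_le_of_separated P hP hw.le (mul_pos hσ hw) x (fun i => (hxK i).1) hx
      fun i => (hxK i).2
    have hhalf : ((D : ℝ) + 1) * (2 * w / (σ * w)) ^ D * c = polySup P w / 2 := by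
      rw [mul_div_mul_right 2 σ hw.ne']
      simp only [c]
      field_simp
    linarith
  refine ⟨S \ K, sdiff_subset, hS.2.1.diff hK.measurableSet, ?_, fun x hx => ?_⟩
  · have hSK : volume.real (S ∩ K) ≤ 1 / 2 * volume.real S :=
      calc volume.real (S ∩ K)
          ≤ volume.real (S ∩ ⋃ i, Icc (g i) (g i + σ * w)) :=
            measureReal_mono (inter_subset_inter_right _ hg)
              (ne_top_of_le_ne_top hS.volume_ne_top (measure_mono inter_subset_left))
        _ ≤ D * (A * (σ * w / w) ^ ε) * volume.real S :=
            hS.volume_inter_iUnion_Icc_le g (by positivity)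
        _ ≤ 1 / 2 * volume.real S := by
            rw [mul_div_cancel_right₀ σ hw.ne']
            gcongr
    have := measureReal_sdiff_add_inter (μ := volume) (s := S) hK.measurableSet hS.volume_ne_top
    change 1 / 2 * volume.real S ≤ volume.real (S \ K)
    linarith
  · exact (not_le.mp fun h => hx.2 ⟨hS.1 hx.1, h⟩).le

theorem exists_pos_forall_isCentral_abs_eval_ge {ε A : ℝ} (hε : 0 < ε) (hA : 0 < A) (D : ℕ) :
    ∃ C > 0, ∀ w, 0 < w → ∀ S, IsCentral ε A w S → ∀ P : Polynomial ℝ, P.natDegree ≤ D →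
      ∃ S' ⊆ S, MeasurableSet S' ∧ 1 / 2 * (volume S).toReal ≤ (volume S').toReal ∧
        ∀ x ∈ S', C * polySup P w ≤ |P.eval x| := by
  set σ := (2 * (D + 1) * A)⁻¹ ^ ε⁻¹
  have hσ : 0 < σ := by positivity
  have hσA : D * (A * σ ^ ε) ≤ 1 / 2 := by
    have hcancel : A * (2 * (D + 1) * A)⁻¹ = (2 * ((D : ℝ) + 1))⁻¹ := by field_simp
    rw [Real.rpow_inv_rpow (by positivity) hε.ne', hcancel, ← div_eq_mul_inv,
      div_le_iff₀ (by positivity)]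
    linarith
  exact ⟨_, by positivity, fun w hw S hS P hP => hS.exists_subset_abs_eval_ge hw hσ hσA hP⟩

section Integral

variable (P : Polynomial ℝ) {w : ℝ}

theorem inv_mul_integral_abs_eval_le (hw : 0 < w) :
    w⁻¹ * ∫ x in Icc (-w) w, |P.eval x| ≤ 2 * polySup P w := by
  have hbound : ∫ x in Icc (-w) w, |P.eval x| ≤ 2 * w * polySup P w :=
    calc ∫ x in Icc (-w) w, |P.eval x| ≤ ‖∫ x in Icc (-w) w, |P.eval x|‖ := Real.le_norm_self _
      _ ≤ polySup P w * volume.real (Icc (-w) w) :=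
          norm_setIntegral_le_of_norm_le_const measure_Icc_lt_top fun x hx => by
            simpa using le_polySup P hx
      _ = 2 * w * polySup P w := by rw [Real.volume_real_Icc_of_le (by linarith)]; ring
  calc w⁻¹ * ∫ x in Icc (-w) w, |P.eval x| ≤ w⁻¹ * (2 * w * polySup P w) := by gcongr
    _ = 2 * polySup P w := by field_simp

theorem mul_volume_le_integral_abs_eval {S' : Set ℝ} {c : ℝ} (hS' : S' ⊆ Icc (-w) w)
    (hmeas : MeasurableSet S') (hc : ∀ x ∈ S', c ≤ |P.eval x|) :
    c * (volume S').toReal ≤ ∫ x in Icc (-w) w, |P.eval x| := by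
  have hint : IntegrableOn (fun x => |P.eval x|) (Icc (-w) w) :=
    (continuous_abs.comp P.continuous).integrableOn_Icc
  calc c * (volume S').toReal ≤ ∫ x in S', |P.eval x| :=
        setIntegral_ge_of_const_le_real hmeas
          (ne_top_of_le_ne_top measure_Icc_lt_top.ne (measure_mono hS')) hc (hint.mono_set hS')
    _ ≤ ∫ x in Icc (-w) w, |P.eval x| :=
        setIntegral_mono_set hint (.of_forall fun x => abs_nonneg _) hS'.eventuallyLE

theorem le_inv_mul_integral_abs_eval {S' : Set ℝ} {c : ℝ} (hw : 0 < w) (hc : 0 ≤ c)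
    (hS' : S' ⊆ Icc (-w) w) (hmeas : MeasurableSet S')
    (hvol : 1 / 2 * (volume (Icc (-w) w)).toReal ≤ (volume S').toReal)
    (hcS' : ∀ x ∈ S', c ≤ |P.eval x|) :
    c ≤ w⁻¹ * ∫ x in Icc (-w) w, |P.eval x| := by
  change 1 / 2 * volume.real (Icc (-w) w) ≤ _ at hvol
  rw [Real.volume_real_Icc_of_le (by linarith)] at hvol
  calc c = w⁻¹ * (c * w) := by field_simp
    _ ≤ w⁻¹ * ∫ x in Icc (-w) w, |P.eval x| := by
        gcongr
        exact (mul_le_mul_of_nonneg_left (by linarith) hc).trans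
          (mul_volume_le_integral_abs_eval P hS' hmeas hcS')

end Integral

/-- **polynomial lemma on central sets.** If `S` is a central set of width
`w ≲ 1` and `P` is a polynomial of degree at most `D`, then `|P| ≳_D ‖P‖_{L^∞([-w,w])}` on a
subset `S' ⊆ S` of measure `≳ |S|`.  In particular, taking `S = [-w,w]`, one has
`‖P‖_{L^∞([-w,w])} ∼ w⁻¹ ∫_{[-w,w]} |P|`. -/
theorem statement18 :
    ∃ ε0 : ℝ, 0 < ε0 ∧ ∀ ε : ℝ, 0 < ε → ε < ε0 → ∀ A : ℝ, 0 < A → ∀ D : ℕ,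
      ∃ c CD : ℝ, 0 < c ∧ 0 < CD ∧
        (∀ w : ℝ, 0 < w → w ≤ 1 → ∀ S : Set ℝ, IsCentral ε A w S →
          ∀ P : Polynomial ℝ, P.natDegree ≤ D →
            ∃ S' : Set ℝ, S' ⊆ S ∧ MeasurableSet S' ∧
              c * (volume S).toReal ≤ (volume S').toReal ∧
              ∀ x ∈ S', CD * polySup P w ≤ |P.eval x|) ∧
        (∀ w : ℝ, 0 < w → w ≤ 1 → ∀ P : Polynomial ℝ, P.natDegree ≤ D →
          CD * polySup P w ≤ w⁻¹ * ∫ x in Set.Icc (-w) w, |P.eval x| ∧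
          w⁻¹ * ∫ x in Set.Icc (-w) w, |P.eval x| ≤ CD⁻¹ * polySup P w) := by
  refine ⟨1, one_pos, fun ε hε hε1 A hA D => ?_⟩
  -- raising `A` to `max A 1` lets one constant serve both `S` and the `1`-central `[-w,w]`
  obtain ⟨C, hC, hcentral⟩ := exists_pos_forall_isCentral_abs_eval_ge hε
    (lt_max_of_lt_right one_pos : 0 < max A 1) D
  have hCD : min C (1 / 2) ≤ C := min_le_left _ _
  have hinv : 2 ≤ (min C (1 / 2))⁻¹ := by
    rw [le_inv_comm₀ two_pos (by positivity)]
    exact (min_le_right C _).trans (by norm_num)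
  refine ⟨1 / 2, min C (1 / 2), by norm_num, by positivity, ?_, ?_⟩
  · intro w hw _ S hS P hP
    have hM := polySup_nonneg P hw.le
    obtain ⟨S', hS'S, hmeas, hvol, hbound⟩ :=
      hcentral w hw S (hS.mono hw.le (le_max_left _ _)) P hP
    exact ⟨S', hS'S, hmeas, hvol, fun x hx => (by gcongr : _ ≤ C * polySup P w).trans (hbound x hx)⟩
  · intro w hw _ P hP
    have hM := polySup_nonneg P hw.le
    obtain ⟨S', hS'S, hmeas, hvol, hbound⟩ :=
      hcentral w hw _ ((isCentral_Icc hε hε1.le hw).mono hw.le (le_max_right _ _)) P hP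
    constructor
    · exact (by gcongr : _ ≤ C * polySup P w).trans
        (le_inv_mul_integral_abs_eval P hw (by positivity) hS'S hmeas hvol hbound)
    · exact (inv_mul_integral_abs_eval_le P hw).trans (by gcongr)

end
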